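/- Let q = 2^m and let f be a polynomial over F_q of degree d > 3 with d not a power of 2. Then δ(f) ≤ 4 if and only if every quadruple (x, y, z, t) ∈ F_q⁴ satisfying P_f(x,y,z) = 0 and P_f(x,y,t) = 0 also satisfies (x+y)(x+z)(x+t)(y+z)(y+t)(z+t)(x+y+z+t) = 0. -/

import Mathlib

/-!
In characteristic 2, for `α = x + y` and `β = f x + f y` a point `u` solves
`f (u + α) + f u = β` exactly when `f x + f y + f u + f (x + y + u) = 0`, and the solutions
come in pairs `{u, u + α}`. So a derivative fibre with more than four elements, i.e. three
distinct pairs `{x, y}`, `{z, x + y + z}`, `{t, x + y + t}`, is the same thing as a point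
with `P_f(x, y, z) = P_f(x, y, t) = 0` off the seven hyperplanes; off the three planes
`(x + y)(x + z)(y + z) = 0` the vanishing of `P_f` is that of the four-point sum.
-/

open MvPolynomial

/-- The differential uniformity of a function `f` on a field `F`:
`δ(f) = max_{α ≠ 0, β} #{x | f(x+α) + f(x) = β}`. -/
noncomputable def deltaUniformity {F : Type*} [Field F] (f : F → F) : ℕ :=
  sSup { n : ℕ | ∃ α β : F, α ≠ 0 ∧ n = Set.ncard {x : F | f (x + α) + f x = β} }

section DifferentialUniformity

variable {F : Type*} [Field F]

theorem deltaUniformity_le_iff [Finite F] (g : F → F) (n : ℕ) :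
    deltaUniformity g ≤ n ↔ ∀ α β : F, α ≠ 0 → {x | g (x + α) + g x = β}.ncard ≤ n := by
  have hbdd : BddAbove {k | ∃ α β : F, α ≠ 0 ∧ k = {x | g (x + α) + g x = β}.ncard} := by
    refine ⟨Nat.card F, ?_⟩
    rintro k ⟨α, β, -, rfl⟩
    exact (Set.ncard_le_ncard (Set.subset_univ _)).trans_eq (Set.ncard_univ F)
  rw [deltaUniformity, csSup_le_iff hbdd ⟨_, 1, 0, one_ne_zero, rfl⟩]
  constructor
  · intro h α β hα
    exact h _ ⟨α, β, hα, rfl⟩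
  · rintro h k ⟨α, β, hα, rfl⟩
    exact h α β hα

def fourPointSum (g : F → F) (x y z : F) : F :=
  g x + g y + g z + g (x + y + z)

def hyperplaneProduct (x y z t : F) : F :=
  (x + y) * (x + z) * (x + t) * (y + z) * (y + t) * (z + t) * (x + y + z + t)

variable [CharP F 2] {g : F → F}

theorem fourPointSum_eq_zero_iff (x y u : F) :
    fourPointSum g x y u = 0 ↔ g (u + (x + y)) + g u = g x + g y := by
  rw [fourPointSum, show u + (x + y) = x + y + u by ring]
  grind

theorem fourPointSum_add_eq_zero {α β x z : F} (hx : g (x + α) + g x = β)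
    (hz : g (z + α) + g z = β) : fourPointSum g x (x + α) z = 0 := by
  rw [fourPointSum, show x + (x + α) + z = z + α by grind]
  grind

theorem five_le_ncard_of_fourPointSum_eq_zero [Finite F] {x y z t : F}
    (hz : fourPointSum g x y z = 0) (ht : fourPointSum g x y t = 0)
    (h : hyperplaneProduct x y z t ≠ 0) :
    5 ≤ {u | g (u + (x + y)) + g u = g x + g y}.ncard := by
  classical
  simp only [hyperplaneProduct, ne_eq, mul_eq_zero, not_or] at h
  have hsub : (({x, y, z, x + y + z, t} : Finset F) : Set F) ⊆
      {u | g (u + (x + y)) + g u = g x + g y} := by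
    intro u hu
    rw [Set.mem_ofPred_eq, ← fourPointSum_eq_zero_iff]
    simp only [Finset.coe_insert, Finset.coe_singleton, Set.mem_insert_iff,
      Set.mem_singleton_iff] at hu
    rcases hu with rfl | rfl | rfl | rfl | rfl
    · rw [fourPointSum, show u + y + u = y by grind]; grind
    · rw [fourPointSum, show x + u + u = x by grind]; grind
    · exact hz
    · rw [fourPointSum, show x + y + (x + y + z) = z by grind]
      rw [fourPointSum] at hz
      grind
    · exact ht
  have hcard : ({x, y, z, x + y + z, t} : Finset F).card = 5 := by
    rw [Finset.card_insert_of_notMem, Finset.card_insert_of_notMem, Finset.card_insert_of_notMem,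
      Finset.card_insert_of_notMem, Finset.card_singleton]
    all_goals simp only [Finset.mem_insert, Finset.mem_singleton]; grind
  rw [← hcard, ← Set.ncard_coe_finset]
  exact Set.ncard_le_ncard hsub

theorem exists_fourPointSum_eq_zero_of_five_le_ncard {α β : F} (hα : α ≠ 0)
    (h : 5 ≤ {u | g (u + α) + g u = β}.ncard) :
    ∃ x y z t, fourPointSum g x y z = 0 ∧ fourPointSum g x y t = 0 ∧
      hyperplaneProduct x y z t ≠ 0 := by
  classical
  obtain ⟨x, hx⟩ :=
    Set.nonempty_of_ncard_ne_zero (by omega : {u | g (u + α) + g u = β}.ncard ≠ 0)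
  have hpair : ((({x, x + α} : Finset F) : Set F)).ncard < {u | g (u + α) + g u = β}.ncard := by
    rw [Set.ncard_coe_finset]
    exact Finset.card_le_two.trans_lt (by omega)
  obtain ⟨z, hz, hzx⟩ := Set.exists_mem_notMem_of_ncard_lt_ncard hpair
  have hquad : ((({x, x + α, z, z + α} : Finset F) : Set F)).ncard <
      {u | g (u + α) + g u = β}.ncard := by
    rw [Set.ncard_coe_finset]
    exact Finset.card_le_four.trans_lt (by omega)
  obtain ⟨t, ht, htxz⟩ := Set.exists_mem_notMem_of_ncard_lt_ncard hquad
  refine ⟨x, x + α, z, t, fourPointSum_add_eq_zero hx hz, fourPointSum_add_eq_zero hx ht, ?_⟩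
  simp only [Finset.coe_insert, Finset.coe_singleton, Set.mem_insert_iff,
    Set.mem_singleton_iff, not_or] at hzx htxz
  simp only [hyperplaneProduct, ne_eq, mul_eq_zero, not_or]
  grind

theorem deltaUniformity_le_four_iff [Finite F] (g : F → F) :
    deltaUniformity g ≤ 4 ↔ ∀ x y z t, fourPointSum g x y z = 0 →
      fourPointSum g x y t = 0 → hyperplaneProduct x y z t = 0 := by
  rw [deltaUniformity_le_iff]
  constructor
  · intro h x y z t hz ht
    by_contra hne
    have hxy : x + y ≠ 0 := fun h0 => hne (by rw [hyperplaneProduct, h0]; ring)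
    have hle := h _ (g x + g y) hxy
    have hge := five_le_ncard_of_fourPointSum_eq_zero hz ht hne
    omega
  · intro h α β hα
    by_contra hlt
    obtain ⟨x, y, z, t, hz, ht, hne⟩ :=
      exists_fourPointSum_eq_zero_of_five_le_ncard hα (not_le.mp hlt)
    exact hne (h x y z t hz ht)

end DifferentialUniformity

theorem eval_eq_zero_iff_fourPointSum_eq_zero {F : Type*} [Field F] {f : Polynomial F}
    {P : MvPolynomial (Fin 3) F}
    (hP : ((X 0 + X 1) * (X 0 + X 2) * (X 1 + X 2) : MvPolynomial (Fin 3) F) * P =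
      Polynomial.aeval (X 0 : MvPolynomial (Fin 3) F) f +
        Polynomial.aeval (X 1 : MvPolynomial (Fin 3) F) f +
        Polynomial.aeval (X 2 : MvPolynomial (Fin 3) F) f +
        Polynomial.aeval (X 0 + X 1 + X 2 : MvPolynomial (Fin 3) F) f)
    {x y z : F} (h : (x + y) * (x + z) * (y + z) ≠ 0) :
    eval ![x, y, z] P = 0 ↔ fourPointSum (fun u => f.eval u) x y z = 0 := by
  have eval_aeval (p : MvPolynomial (Fin 3) F) :
      eval ![x, y, z] (Polynomial.aeval p f) = f.eval (eval ![x, y, z] p) := by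
    simpa using (Polynomial.aeval_algHom_apply (aeval ![x, y, z]) p f).symm
  have hxyz := congrArg (eval ![x, y, z]) hP
  simp only [map_mul, map_add, eval_aeval, eval_X, Matrix.cons_val_zero, Matrix.cons_val_one,
    Matrix.cons_val_two, Matrix.tail_cons, Matrix.head_cons] at hxyz
  rw [fourPointSum, ← hxyz]
  simp [h]

theorem stmt_6_general (m : ℕ) (f : Polynomial (GaloisField 2 m))
    (P : MvPolynomial (Fin 3) (GaloisField 2 m))
    (hP : ((X 0 + X 1) * (X 0 + X 2) * (X 1 + X 2) : MvPolynomial (Fin 3) (GaloisField 2 m)) * P =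
      Polynomial.aeval (X 0 : MvPolynomial (Fin 3) (GaloisField 2 m)) f +
        Polynomial.aeval (X 1 : MvPolynomial (Fin 3) (GaloisField 2 m)) f +
        Polynomial.aeval (X 2 : MvPolynomial (Fin 3) (GaloisField 2 m)) f +
        Polynomial.aeval (X 0 + X 1 + X 2 : MvPolynomial (Fin 3) (GaloisField 2 m)) f) :
    deltaUniformity (fun x => f.eval x) ≤ 4 ↔
      ∀ x y z t : GaloisField 2 m,
        eval ![x, y, z] P = 0 → eval ![x, y, t] P = 0 →
        (x + y) * (x + z) * (x + t) * (y + z) * (y + t) * (z + t) * (x + y + z + t) = 0 := by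
  rw [deltaUniformity_le_four_iff]
  refine forall₄_congr fun x y z t => ?_
  by_cases h : hyperplaneProduct x y z t = 0
  · exact iff_of_true (fun _ _ => h) (fun _ _ => h)
  have hz : (x + y) * (x + z) * (y + z) ≠ 0 := fun h0 =>
    h (by rw [hyperplaneProduct]
          linear_combination (x + t) * (y + t) * (z + t) * (x + y + z + t) * h0)
  have ht : (x + y) * (x + t) * (y + t) ≠ 0 := fun h0 =>
    h (by rw [hyperplaneProduct]
          linear_combination (x + z) * (y + z) * (z + t) * (x + y + z + t) * h0)
  rw [eval_eq_zero_iff_fourPointSum_eq_zero hP hz, eval_eq_zero_iff_fourPointSum_eq_zero hP ht]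
  rfl

/-- Geometric characterization of differentially 4-uniform polynomial functions:
`δ(f) ≤ 4` iff every `F_q`-point `(x,y,z,t)` with `P_f(x,y,z) = P_f(x,y,t) = 0` lies on
the union of the seven hyperplanes. -/
theorem stmt_6 (m : ℕ) (f : Polynomial (GaloisField 2 m))
    (hd : 3 < f.natDegree) (hd2 : ¬∃ k : ℕ, f.natDegree = 2 ^ k)
    (P : MvPolynomial (Fin 3) (GaloisField 2 m))
    (hP : ((X 0 + X 1) * (X 0 + X 2) * (X 1 + X 2) : MvPolynomial (Fin 3) (GaloisField 2 m)) * P =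
      Polynomial.aeval (X 0 : MvPolynomial (Fin 3) (GaloisField 2 m)) f +
        Polynomial.aeval (X 1 : MvPolynomial (Fin 3) (GaloisField 2 m)) f +
        Polynomial.aeval (X 2 : MvPolynomial (Fin 3) (GaloisField 2 m)) f +
        Polynomial.aeval (X 0 + X 1 + X 2 : MvPolynomial (Fin 3) (GaloisField 2 m)) f) :
    deltaUniformity (fun x => f.eval x) ≤ 4 ↔
      ∀ x y z t : GaloisField 2 m,
        eval ![x, y, z] P = 0 → eval ![x, y, t] P = 0 →
        (x + y) * (x + z) * (x + t) * (y + z) * (y + t) * (z + t) * (x + y + z + t) = 0 :=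
  stmt_6_general m f P hP
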